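/- Let ℓ ≥ 3. Then for all real x with 0 < x < 1/2: x·U_{ℓ−1}(1/(2x)) · Σ_{n≥0} (Σ_{0≤m≤n, m≡ℓ−2 (mod ℓ)} b(n,m))·x^n = 1 + x · Σ_{n≥0} c(n, ℓ−1)·x^n, where all series converge absolutely. -/

import Mathlib

open Filter Real

/-- `aa n m` = number of length-`n` paths on `ℤ≥0` with steps `±1` starting at `0`
and ending at `m`. -/
def aa : ℕ → ℕ → ℕ
  | 0, m => if m = 0 then 1 else 0
  | n+1, m => aa n (m+1) + (if m = 0 then 0 else aa n (m-1))

/-- `aSum n = Σ_{m=0}^n aa n m`. -/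
def aSum (n : ℕ) : ℕ := ∑ m ∈ Finset.range (n+1), aa n m

/-- The modular variant `b(n,m)` depending on `ℓ`:
`b(n,m) = a(n,m)` if `m ≡ ℓ-1 (mod ℓ)`; otherwise `b(0,m) = δ_{m,0}`, and for `n ≥ 1`,
`b(n,m) = b(n-1,m-1) + b(n-1,m+1)` if `m % ℓ < ℓ-2` (negative-index terms are `0`),
and `b(n,m) = b(n-1,m-1)` if `m ≡ ℓ-2 (mod ℓ)`. -/
def bb (ℓ : ℕ) : ℕ → ℕ → ℕ
  | 0, m => if m % ℓ = ℓ - 1 then aa 0 m else if m = 0 then 1 else 0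
  | n+1, m =>
    if m % ℓ = ℓ - 1 then aa (n+1) m
    else if m % ℓ = ℓ - 2 then (if m = 0 then 0 else bb ℓ n (m-1))
    else (if m = 0 then 0 else bb ℓ n (m-1)) + bb ℓ n (m+1)

/-- `bSum ℓ n = Σ_{m=0}^n bb ℓ n m`. -/
def bSum (ℓ : ℕ) (n : ℕ) : ℕ := ∑ m ∈ Finset.range (n+1), bb ℓ n m

/-- `cc ℓ n r = Σ_{m ≥ 0, m ≡ r (mod ℓ)} aa n m` (finite since `aa n m = 0` for `m > n`). -/
def cc (ℓ : ℕ) (n r : ℕ) : ℕ :=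
  ∑ m ∈ Finset.range (n+1), if m % ℓ = r then aa n m else 0

/-- `ww ℓ n = Σ_{0 ≤ m ≤ n, m ≡ ℓ-1 (mod ℓ)} bb ℓ n m`. -/
def ww (ℓ : ℕ) (n : ℕ) : ℕ :=
  ∑ m ∈ Finset.range (n+1), if m % ℓ = ℓ - 1 then bb ℓ n m else 0

lemma aa_le (n m : ℕ) : aa n m ≤ 2 ^ n := by
  induction n generalizing m with
  | zero => simp [aa]; split <;> simp
  | succ n ih =>
    rw [aa, pow_succ, mul_two]
    gcongr
    · exact ih _
    · split
      · positivity
      · exact ih _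

lemma aa_eq_zero {n m : ℕ} (h : n < m) : aa n m = 0 := by
  induction n generalizing m with
  | zero => simp [aa]; omega
  | succ n ih =>
    rw [aa, ih (show n < m + 1 by omega)]
    have : m ≠ 0 := by omega
    simp [this, ih (show n < m - 1 by omega)]

lemma bb_le (ℓ n m : ℕ) : bb ℓ n m ≤ 2 ^ n := by
  induction n generalizing m with
  | zero =>
    rw [bb]
    split
    · exact aa_le 0 m
    · split <;> simp
  | succ n ih =>
    rw [bb]
    split
    · exact aa_le _ _
    · split
      · split
        · positivity
        · calc bb ℓ n (m-1) ≤ 2^n := ih _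
            _ ≤ 2^(n+1) := Nat.pow_le_pow_right (by norm_num) (by omega)
      · rw [pow_succ, mul_two]
        gcongr
        · split
          · positivity
          · exact ih _
        · exact ih _

lemma bb_eq_zero {ℓ n m : ℕ} (h : n < m) : bb ℓ n m = 0 := by
  induction n generalizing m with
  | zero =>
    rw [bb, aa_eq_zero h]
    have : m ≠ 0 := by omega
    simp [this]
  | succ n ih =>
    rw [bb, aa_eq_zero h]
    have : m ≠ 0 := by omega
    simp [this, ih (show n < m - 1 by omega), ih (show n < m + 1 by omega)]

noncomputable def qq (x : ℝ) : ℕ → ℝ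
  | 0 => 1
  | 1 => 1
  | (k+2) => qq x (k+1) - x^2 * qq x k

lemma qq_pos {x : ℝ} (hx0 : 0 < x) (hx : x < 1/2) : ∀ k, 0 < qq x k ∧ qq x k / 2 ≤ qq x (k+1) := by
  intro k
  induction k with
  | zero => norm_num [qq]
  | succ k ih =>
    obtain ⟨h1, h2⟩ := ih
    have h3 : 0 < qq x (k+1) := by linarith
    constructor
    · exact h3
    · show qq x (k+1) / 2 ≤ qq x (k+2)
      rw [show qq x (k+2) = qq x (k+1) - x^2 * qq x k from rfl]
      have hx2 : x^2 ≤ 1/4 := by nlinarith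
      have h4 : x^2 * qq x k ≤ (1/4) * qq x k := by nlinarith
      linarith

lemma qq_cheb {x : ℝ} (hx0 : 0 < x) :
    ∀ k : ℕ, qq x k = x ^ k * (Polynomial.Chebyshev.U ℝ (k : ℤ)).eval (1/(2*x)) := by
  intro k
  induction k using Nat.strong_induction_on with
  | _ k ih =>
    match k with
    | 0 => simp [qq, Polynomial.Chebyshev.U_zero]
    | 1 =>
      simp only [qq, Nat.cast_one, Polynomial.Chebyshev.U_one]
      simp only [Polynomial.eval_mul, Polynomial.eval_ofNat, Polynomial.eval_X]
      field_simp
    | (k+2) =>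
      have h1 := ih (k+1) (by omega)
      have h2 := ih k (by omega)
      have hU : Polynomial.Chebyshev.U ℝ ((k : ℤ) + 2) =
          2 * Polynomial.X * Polynomial.Chebyshev.U ℝ ((k:ℤ)+1) - Polynomial.Chebyshev.U ℝ (k:ℤ) :=
        Polynomial.Chebyshev.U_add_two ℝ (k : ℤ)
      rw [show qq x (k+2) = qq x (k+1) - x^2 * qq x k from rfl, h1, h2]
      push_cast
      rw [hU]
      simp only [Polynomial.eval_sub, Polynomial.eval_mul, Polynomial.eval_ofNat, Polynomial.eval_X]
      have hx' : x ≠ 0 := ne_of_gt hx0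
      field_simp
      ring

section GF
variable {x : ℝ}

lemma summable_of_le_two_pow (hx0 : 0 < x) (hx : x < 1/2) (g : ℕ → ℝ)
    (h0 : ∀ n, 0 ≤ g n) (h1 : ∀ n, g n ≤ 2 ^ n) : Summable (fun n => g n * x ^ n) := by
  apply Summable.of_nonneg_of_le (fun n => mul_nonneg (h0 n) (by positivity))
    (fun n => ?_) (summable_geometric_of_lt_one (by linarith) (by linarith) (r := 2*x))
  calc g n * x ^ n ≤ 2 ^ n * x ^ n := by
        apply mul_le_mul_of_nonneg_right (h1 n) (by positivity)
    _ = (2*x) ^ n := by rw [mul_pow]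

noncomputable def FF (x : ℝ) (m : ℕ) : ℝ := ∑' n, (aa n m : ℝ) * x ^ n

noncomputable def GG (ℓ : ℕ) (x : ℝ) (m : ℕ) : ℝ := ∑' n, (bb ℓ n m : ℝ) * x ^ n

lemma summable_FF (hx0 : 0 < x) (hx : x < 1/2) (m : ℕ) :
    Summable (fun n => (aa n m : ℝ) * x ^ n) :=
  summable_of_le_two_pow hx0 hx _ (fun n => by positivity)
    (fun n => by exact_mod_cast Nat.cast_le.mpr (aa_le n m) |>.trans (by push_cast; norm_num))

lemma summable_GG (ℓ : ℕ) (hx0 : 0 < x) (hx : x < 1/2) (m : ℕ) :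
    Summable (fun n => (bb ℓ n m : ℝ) * x ^ n) :=
  summable_of_le_two_pow hx0 hx _ (fun n => by positivity)
    (fun n => by exact_mod_cast Nat.cast_le.mpr (bb_le ℓ n m) |>.trans (by push_cast; norm_num))

lemma FF_nonneg (hx0 : 0 < x) (hx : x < 1/2) (m : ℕ) : 0 ≤ FF x m :=
  tsum_nonneg (fun n => by positivity)

lemma FF_le (hx0 : 0 < x) (hx : x < 1/2) (m : ℕ) : FF x m ≤ (1 - 2*x)⁻¹ := by
  have h2x : (0:ℝ) ≤ 2*x := by linarith
  have h2x' : 2*x < 1 := by linarith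
  calc FF x m ≤ ∑' n : ℕ, (2*x) ^ n := by
        apply Summable.tsum_le_tsum _ (summable_FF hx0 hx m)
          (summable_geometric_of_lt_one h2x h2x')
        intro n
        rw [mul_pow]
        apply mul_le_mul_of_nonneg_right _ (by positivity)
        exact_mod_cast Nat.cast_le.mpr (aa_le n m) |>.trans (by push_cast; norm_num)
    _ = (1 - 2*x)⁻¹ := tsum_geometric_of_lt_one h2x h2x'

lemma FF_rec (hx0 : 0 < x) (hx : x < 1/2) (m : ℕ) :
    FF x (m+1) = x * FF x m + x * FF x (m+2) := by
  have hs2 : Summable (fun n => (aa n (m+2) : ℝ) * x ^ n) := summable_FF hx0 hx (m+2)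
  have hs0 : Summable (fun n => (aa n m : ℝ) * x ^ n) := summable_FF hx0 hx m
  have key : ∀ n : ℕ, (aa (n+1) (m+1) : ℝ) * x ^ (n+1)
      = x * ((aa n (m+2) : ℝ) * x ^ n) + x * ((aa n m : ℝ) * x ^ n) := by
    intro n
    rw [show aa (n+1) (m+1) = aa n (m+2) + aa n m by rw [aa]; simp]
    push_cast
    ring
  rw [FF, Summable.tsum_eq_zero_add (summable_FF hx0 hx (m+1))]
  simp only [key, show aa 0 (m+1) = 0 by simp [aa], Nat.cast_zero, zero_mul, zero_add]
  rw [Summable.tsum_add (hs2.mul_left x) (hs0.mul_left x), tsum_mul_left, tsum_mul_left]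
  rw [FF, FF]
  ring

noncomputable def yy (x : ℝ) : ℝ := (1 - Real.sqrt (1 - 4*x^2))/(2*x)

lemma yy_facts (hx0 : 0 < x) (hx : x < 1/2) :
    0 < yy x ∧ yy x < 1 ∧ x * yy x ^ 2 - yy x + x = 0 ∧ 2 * x * yy x < 1 := by
  have h4 : 0 < 1 - 4*x^2 := by nlinarith
  have hs2 : Real.sqrt (1 - 4*x^2) ^ 2 = 1 - 4*x^2 := Real.sq_sqrt h4.le
  have hs0 : 0 < Real.sqrt (1 - 4*x^2) := Real.sqrt_pos.mpr h4
  have hs1 : Real.sqrt (1 - 4*x^2) < 1 := by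
    nlinarith
  have hsgt : 1 - 2*x < Real.sqrt (1 - 4*x^2) := by
    nlinarith
  refine ⟨by rw [yy]; exact div_pos (by linarith) (by linarith), ?_, ?_, ?_⟩
  · rw [yy, div_lt_one (by linarith)]
    linarith
  · rw [yy]
    generalize Real.sqrt (1 - 4*x^2) = s at *
    field_simp
    nlinarith
  · rw [yy]
    generalize Real.sqrt (1 - 4*x^2) = s at *
    field_simp
    linarith

lemma FF_succ (hx0 : 0 < x) (hx : x < 1/2) (m : ℕ) : FF x (m+1) = yy x * FF x m := by
  obtain ⟨hy0, hy1, hyx, h2xy⟩ := yy_facts hx0 hx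
  set y := yy x with hy
  have hxne : x ≠ 0 := ne_of_gt hx0
  have hyne : y ≠ 0 := ne_of_gt hy0
  set D : ℕ → ℝ := fun m => FF x (m+1) - y * FF x m with hD
  have hDrec : ∀ m, D (m+1) = x * D m + x * D (m+2) := by
    intro m
    simp only [hD]
    linear_combination FF_rec hx0 hx (m+1) - y * FF_rec hx0 hx m
  set E : ℕ → ℝ := fun m => D (m+1) - y * D m with hEdef
  have hE : ∀ m, x * y * E (m+1) = x * E m := by
    intro m
    simp only [hEdef]
    linear_combination (-y) * hDrec m - D (m+1) * hyx
  have hE2 : ∀ m, y * E (m+1) = E m := by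
    intro m
    apply mul_left_cancel₀ hxne
    rw [← mul_assoc]
    exact hE m
  have hEgeo : ∀ m, y ^ m * E m = E 0 := by
    intro m
    induction m with
    | zero => simp
    | succ m ih =>
      rw [pow_succ, mul_assoc, hE2 m, ih]
  -- bounds
  have hFb : ∀ m, |FF x m| ≤ (1-2*x)⁻¹ := by
    intro m
    rw [abs_of_nonneg (FF_nonneg hx0 hx m)]
    exact FF_le hx0 hx m
  have hDb : ∀ m, |D m| ≤ 2 * (1-2*x)⁻¹ := by
    intro m
    simp only [hD]
    calc |FF x (m+1) - y * FF x m| ≤ |FF x (m+1)| + |y * FF x m| := abs_sub _ _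
      _ ≤ (1-2*x)⁻¹ + 1 * (1-2*x)⁻¹ := by
          rw [abs_mul]
          gcongr
          · exact hFb _
          · rw [abs_of_pos hy0]; linarith
          · exact hFb _
      _ = 2 * (1-2*x)⁻¹ := by ring
  have hEb : ∀ m, |E m| ≤ 4 * (1-2*x)⁻¹ := by
    intro m
    simp only [hEdef]
    calc |D (m+1) - y * D m| ≤ |D (m+1)| + |y * D m| := abs_sub _ _
      _ ≤ 2*(1-2*x)⁻¹ + 1 * (2*(1-2*x)⁻¹) := by
          rw [abs_mul]
          gcongr
          · exact hDb _
          · rw [abs_of_pos hy0]; linarith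
          · exact hDb _
      _ = 4 * (1-2*x)⁻¹ := by ring
  have hE0 : E 0 = 0 := by
    have hle : ∀ m : ℕ, |E 0| ≤ y ^ m * (4 * (1-2*x)⁻¹) := by
      intro m
      rw [← hEgeo m, abs_mul, abs_pow, abs_of_pos hy0]
      gcongr
      exact hEb m
    have htend : Filter.Tendsto (fun m : ℕ => y ^ m * (4 * (1-2*x)⁻¹)) Filter.atTop (nhds 0) := by
      rw [show (0:ℝ) = 0 * (4 * (1-2*x)⁻¹) by ring]
      exact (tendsto_pow_atTop_nhds_zero_of_lt_one hy0.le hy1).mul_const _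
    have : |E 0| ≤ 0 := ge_of_tendsto htend (Filter.Eventually.of_forall hle)
    have := abs_nonneg (E 0)
    rw [abs_eq_zero.symm]
    linarith
  have hEzero : ∀ m, E m = 0 := by
    intro m
    have := hEgeo m
    rw [hE0] at this
    have hyp : y ^ m ≠ 0 := pow_ne_zero _ hyne
    exact (mul_eq_zero.mp this).resolve_left hyp
  have hDgeo : ∀ m, D (m+1) = y * D m := by
    intro m
    have := hEzero m
    simp only [hEdef] at this
    linarith
  have hD0 : D 0 = 0 := by
    have hkey : D 0 * (1 - 2*x*y) = 0 := by
      have hg0 := hDgeo 0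
      simp only [hD] at hg0 ⊢
      linear_combination FF_rec hx0 hx 0 + x * hg0 + FF x 0 * hyx
    have hne : (1 - 2*x*y) ≠ 0 := by intro h; rw [sub_eq_zero] at h; linarith
    exact (mul_eq_zero.mp hkey).resolve_right hne
  have hDall : ∀ m, D m = 0 := by
    intro m
    induction m with
    | zero => exact hD0
    | succ m ih => rw [hDgeo m, ih, mul_zero]
  have := hDall m
  simp only [hD] at this
  linarith

lemma bb_eq_aa {ℓ n m : ℕ} (h : m % ℓ = ℓ - 1) : bb ℓ n m = aa n m := by
  cases n <;> rw [bb] <;> simp [h]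

lemma GG_eq_FF {ℓ m : ℕ} (h : m % ℓ = ℓ - 1) : GG ℓ x m = FF x m := by
  rw [GG, FF]
  congr 1
  ext n
  rw [bb_eq_aa h]

lemma GG0 (hx0 : 0 < x) (hx : x < 1/2) (k : ℕ) :
    GG (k+3) x 0 = 1 + x * GG (k+3) x 1 := by
  have e1 : ¬ ((0:ℕ) % (k+3) = k+2) := by rw [Nat.zero_mod]; omega
  have e2 : ¬ ((0:ℕ) % (k+3) = k+1) := by rw [Nat.zero_mod]; omega
  have key : ∀ n : ℕ, (bb (k+3) (n+1) 0 : ℝ) * x ^ (n+1) = x * ((bb (k+3) n 1 : ℝ) * x ^ n) := by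
    intro n
    rw [show bb (k+3) (n+1) 0 = bb (k+3) n 1 by rw [bb]; simp [e1, e2]]
    ring
  rw [GG, Summable.tsum_eq_zero_add (summable_GG _ hx0 hx 0)]
  simp only [key, show bb (k+3) 0 0 = 1 by rw [bb]; simp [e1], Nat.cast_one, pow_zero, mul_one]
  rw [tsum_mul_left]
  rw [GG]

lemma GG_pre (hx0 : 0 < x) (hx : x < 1/2) {k m : ℕ} (h : (m+1) % (k+3) = k+1) :
    GG (k+3) x (m+1) = x * GG (k+3) x m := by
  have h1 : ¬ ((m+1) % (k+3) = k+2) := by omega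
  have key : ∀ n : ℕ, (bb (k+3) (n+1) (m+1) : ℝ) * x ^ (n+1)
      = x * ((bb (k+3) n m : ℝ) * x ^ n) := by
    intro n
    rw [show bb (k+3) (n+1) (m+1) = bb (k+3) n m by rw [bb]; simp [h1, h]]
    ring
  have h0 : bb (k+3) 0 (m+1) = 0 := by rw [bb]; simp [h1]
  rw [GG, Summable.tsum_eq_zero_add (summable_GG _ hx0 hx (m+1))]
  simp only [key, h0, Nat.cast_zero, pow_zero, mul_one, zero_add]
  rw [tsum_mul_left]
  rw [GG]

lemma GG_mid (hx0 : 0 < x) (hx : x < 1/2) {k m : ℕ} (h1 : ¬ ((m+1) % (k+3) = k+2))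
    (h2 : ¬ ((m+1) % (k+3) = k+1)) :
    GG (k+3) x (m+1) = x * GG (k+3) x m + x * GG (k+3) x (m+2) := by
  have key : ∀ n : ℕ, (bb (k+3) (n+1) (m+1) : ℝ) * x ^ (n+1)
      = x * ((bb (k+3) n m : ℝ) * x ^ n) + x * ((bb (k+3) n (m+2) : ℝ) * x ^ n) := by
    intro n
    rw [show bb (k+3) (n+1) (m+1) = bb (k+3) n m + bb (k+3) n (m+2) by
      rw [bb]; simp [h1, h2]]
    push_cast
    ring
  have h0 : bb (k+3) 0 (m+1) = 0 := by rw [bb]; simp [h1]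
  rw [GG, Summable.tsum_eq_zero_add (summable_GG _ hx0 hx (m+1))]
  simp only [key, h0, Nat.cast_zero, pow_zero, mul_one, zero_add]
  rw [Summable.tsum_add ((summable_GG _ hx0 hx m).mul_left x) ((summable_GG _ hx0 hx (m+2)).mul_left x),
    tsum_mul_left, tsum_mul_left]
  rw [GG, GG]

lemma mod_helper (k j r : ℕ) (h : r < k+3) : (j*(k+3) + r) % (k+3) = r := by
  rw [Nat.add_comm, Nat.add_mul_mod_self_right]
  exact Nat.mod_eq_of_lt h

lemma Qblock (hx0 : 0 < x) (hx : x < 1/2) (k j : ℕ) :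
    ∀ d r, r + d = k → qq x (d+1) * GG (k+3) x (j*(k+3) + r + 1)
      = x * qq x d * GG (k+3) x (j*(k+3) + r) := by
  intro d
  induction d with
  | zero =>
    intro r hr
    have hr' : r = k := by omega
    have hmod : (j*(k+3) + r + 1) % (k+3) = k+1 := by
      rw [show j*(k+3) + r + 1 = j*(k+3) + (r+1) by ring]
      rw [mod_helper k j (r+1) (by omega)]
      omega
    have := GG_pre hx0 hx (m := j*(k+3)+r) hmod
    rw [show qq x 1 = 1 from rfl, show qq x 0 = 1 from rfl]
    rw [this]
    ring
  | succ d ih =>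
    intro r hr
    have hmod : (j*(k+3) + r + 1) % (k+3) = r+1 := by
      rw [show j*(k+3) + r + 1 = j*(k+3) + (r+1) by ring]
      exact mod_helper k j (r+1) (by omega)
    have hmid := GG_mid hx0 hx (m := j*(k+3)+r) (k := k)
      (by rw [hmod]; omega) (by rw [hmod]; omega)
    have hIH := ih (r+1) (by omega)
    rw [show j*(k+3) + (r+1) + 1 = j*(k+3) + r + 2 by ring,
        show j*(k+3) + (r+1) = j*(k+3) + r + 1 by ring] at hIH
    rw [show qq x (d+2) = qq x (d+1) - x^2 * qq x d from rfl]
    linear_combination qq x (d+1) * hmid + x * hIH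

lemma Rblock (hx0 : 0 < x) (hx : x < 1/2) (k j : ℕ) :
    ∀ r d, r + d = k+1 → qq x (k+1) * GG (k+3) x (j*(k+3) + r)
      = x^r * qq x d * GG (k+3) x (j*(k+3)) := by
  intro r
  induction r with
  | zero =>
    intro d hd
    have : d = k+1 := by omega
    subst this
    simp
  | succ r ih =>
    intro d hd
    have hIH := ih (d+1) (by omega)
    have hQ := Qblock hx0 hx k j d r (by omega)
    show qq x (k+1) * GG (k+3) x (j*(k+3) + r + 1) = x^(r+1) * qq x d * GG (k+3) x (j*(k+3))
    apply mul_left_cancel₀ (ne_of_gt (qq_pos hx0 hx (d+1)).1)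
    linear_combination qq x (k+1) * hQ + x * qq x d * hIH

lemma GG_block0 (hx0 : 0 < x) (hx : x < 1/2) (k : ℕ) :
    qq x (k+2) * GG (k+3) x 0 = qq x (k+1) := by
  have hQ := Qblock hx0 hx k 0 k 0 (by omega)
  simp only [Nat.zero_mul, Nat.zero_add] at hQ
  have h0 := GG0 hx0 hx k
  rw [show qq x (k+2) = qq x (k+1) - x^2 * qq x k from rfl]
  linear_combination qq x (k+1) * h0 + x * hQ

lemma GG_blockj (hx0 : 0 < x) (hx : x < 1/2) (k j : ℕ) :
    qq x (k+2) * GG (k+3) x (j*(k+3) + k + 3)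
      = x * qq x (k+1) * FF x (j*(k+3) + k + 2) := by
  have hm : (j*(k+3) + k + 3) % (k+3) = 0 := by
    rw [show j*(k+3) + k + 3 = (j+1)*(k+3) by ring]
    exact Nat.mul_mod_left _ _
  have hmid := GG_mid hx0 hx (m := j*(k+3)+k+2) (k := k)
    (by rw [show j*(k+3)+k+2+1 = j*(k+3)+k+3 by ring, hm]; omega)
    (by rw [show j*(k+3)+k+2+1 = j*(k+3)+k+3 by ring, hm]; omega)
  have hQ := Qblock hx0 hx k (j+1) k 0 (by omega)
  simp only [show (j+1)*(k+3) + 0 + 1 = j*(k+3)+k+2+2 by ring,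
    show (j+1)*(k+3) + 0 = j*(k+3)+k+3 by ring] at hQ
  have hFF : GG (k+3) x (j*(k+3)+k+2) = FF x (j*(k+3)+k+2) := by
    apply GG_eq_FF
    rw [show j*(k+3)+k+2 = j*(k+3)+(k+2) by ring, mod_helper k j (k+2) (by omega)]
    omega
  rw [← hFF]
  rw [show j*(k+3)+k+2+1 = j*(k+3)+k+3 by ring] at hmid
  rw [show qq x (k+2) = qq x (k+1) - x^2 * qq x k from rfl]
  linear_combination qq x (k+1) * hmid + x * hQ

lemma GG_val0 (hx0 : 0 < x) (hx : x < 1/2) (k : ℕ) :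
    qq x (k+2) * GG (k+3) x (k+1) = x^(k+1) := by
  have hR := Rblock hx0 hx k 0 (k+1) 0 (by omega)
  simp only [Nat.zero_mul, Nat.zero_add, show qq x 0 = 1 from rfl, mul_one] at hR
  have h0 := GG_block0 hx0 hx k
  apply mul_left_cancel₀ (ne_of_gt (qq_pos hx0 hx (k+1)).1)
  linear_combination qq x (k+2) * hR + x^(k+1) * h0

lemma GG_valj (hx0 : 0 < x) (hx : x < 1/2) (k j : ℕ) :
    qq x (k+2) * GG (k+3) x (j*(k+3) + k + 3 + (k+1)) = x^(k+2) * FF x (j*(k+3) + k + 2) := by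
  have hR := Rblock hx0 hx k (j+1) (k+1) 0 (by omega)
  simp only [show (j+1)*(k+3) + (k+1) = j*(k+3)+k+3+(k+1) by ring,
    show (j+1)*(k+3) = j*(k+3)+k+3 by ring, show qq x 0 = 1 from rfl, mul_one] at hR
  have hB := GG_blockj hx0 hx k j
  apply mul_left_cancel₀ (ne_of_gt (qq_pos hx0 hx (k+1)).1)
  linear_combination qq x (k+2) * hR + x^(k+1) * hB

lemma FF_pow (hx0 : 0 < x) (hx : x < 1/2) (m : ℕ) : FF x m = yy x ^ m * FF x 0 := by
  induction m with
  | zero => simp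
  | succ m ih => rw [FF_succ hx0 hx m, ih, pow_succ]; ring

end GF

section Swap
variable {x : ℝ}

lemma mod_helper2 {ℓ r : ℕ} (j : ℕ) (h : r < ℓ) : (j*ℓ + r) % ℓ = r := by
  rw [Nat.add_comm, Nat.add_mul_mod_self_right]
  exact Nat.mod_eq_of_lt h

lemma summable_n_mul_geom (hx0 : 0 < x) (hx : x < 1/2) :
    Summable (fun n : ℕ => ((n:ℝ)+1) * (2*x)^n) := by
  have h : ‖2*x‖ < 1 := by rw [Real.norm_eq_abs, abs_of_pos (by linarith)]; linarith
  have h1 := summable_pow_mul_geometric_of_norm_lt_one 1 h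
  simp only [pow_one] at h1
  have h2 := summable_geometric_of_norm_lt_one h
  have := h1.add h2
  apply this.congr
  intro n
  ring

lemma swap_lemma (hx0 : 0 < x) (hx : x < 1/2) (g : ℕ → ℕ → ℕ) {r ℓ : ℕ} (hr : r < ℓ)
    (hg_le : ∀ n m, g n m ≤ 2^n) (hg0 : ∀ n m, n < m → g n m = 0) :
    Summable (fun n => (∑ m ∈ Finset.range (n+1), if m % ℓ = r then (g n m : ℝ) else 0) * x^n)
    ∧ Summable (fun j => ∑' n, (g n (j*ℓ + r) : ℝ) * x^n)
    ∧ ∑' n, (∑ m ∈ Finset.range (n+1), if m % ℓ = r then (g n m : ℝ) else 0) * x^n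
      = ∑' j, ∑' n, (g n (j*ℓ + r) : ℝ) * x^n := by
  set f : ℕ → ℕ → ℝ := fun n m => (if m % ℓ = r then (g n m : ℝ) else 0) * x ^ n with hf
  have hnn : ∀ n m, 0 ≤ f n m := by
    intro n m
    simp only [hf]
    split <;> positivity
  have hrow0 : ∀ n, ∀ m ∉ Finset.range (n+1), f n m = 0 := by
    intro n m hm
    simp only [Finset.mem_range, not_lt] at hm
    simp [hf, hg0 n m (by omega)]
  have hrow : ∀ n, Summable (fun m => f n m) := by
    intro n
    exact summable_of_ne_finset_zero (hrow0 n)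
  have hrow_sum : ∀ n, ∑' m, f n m
      = (∑ m ∈ Finset.range (n+1), if m % ℓ = r then (g n m : ℝ) else 0) * x^n := by
    intro n
    rw [tsum_eq_sum (hrow0 n), Finset.sum_mul]
  have hw_le : ∀ n, (∑ m ∈ Finset.range (n+1), if m % ℓ = r then (g n m : ℝ) else 0) * x^n
      ≤ ((n:ℝ)+1) * (2*x)^n := by
    intro n
    rw [mul_pow]
    calc (∑ m ∈ Finset.range (n+1), if m % ℓ = r then (g n m : ℝ) else 0) * x^n
        ≤ (∑ m ∈ Finset.range (n+1), (2:ℝ)^n) * x^n := by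
          apply mul_le_mul_of_nonneg_right _ (by positivity)
          apply Finset.sum_le_sum
          intro m _
          split
          · exact_mod_cast Nat.cast_le.mpr (hg_le n m) |>.trans (by push_cast; norm_num)
          · positivity
      _ = ((n:ℝ)+1) * ((2:ℝ)^n * x^n) := by
          rw [Finset.sum_const, Finset.card_range]
          push_cast
          ring
  have hw_nonneg : ∀ n, 0 ≤ (∑ m ∈ Finset.range (n+1), if m % ℓ = r then (g n m : ℝ) else 0) * x^n := by
    intro n
    apply mul_nonneg _ (by positivity)
    apply Finset.sum_nonneg
    intro m _
    split <;> positivity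
  have hw_sum : Summable (fun n => (∑ m ∈ Finset.range (n+1), if m % ℓ = r then (g n m : ℝ) else 0) * x^n) :=
    Summable.of_nonneg_of_le hw_nonneg hw_le (summable_n_mul_geom hx0 hx)
  have huncurry : Summable (Function.uncurry f) := by
    apply (summable_prod_of_nonneg (f := Function.uncurry f) (fun p => hnn p.1 p.2)).mpr
    refine ⟨fun n => (hrow n).congr (fun m => rfl), ?_⟩
    apply hw_sum.congr
    intro n
    exact (hrow_sum n).symm
  -- columns
  have hcol_eq : ∀ m, ∑' n, f n m = if m % ℓ = r then ∑' n, (g n m : ℝ) * x^n else 0 := by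
    intro m
    by_cases h : m % ℓ = r
    · simp only [hf, h, if_true]
    · simp only [hf, h, if_false, zero_mul, tsum_zero]
  have hcol_summable : Summable (fun m => ∑' n, f n m) := by
    have h2 := (summable_prod_of_nonneg (f := fun p : ℕ × ℕ => f p.2 p.1)
      (fun p => hnn p.2 p.1)).mp (huncurry.prod_symm.congr (fun p => rfl))
    exact h2.2
  have hcomm : ∑' n, ∑' m, f n m = ∑' m, ∑' n, f n m :=
    (Summable.tsum_comm' huncurry hrow (fun m => huncurry.prod_symm.prod_factor m |>.congr (fun n => rfl))).symm
  -- reindex columns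
  have hinj : Function.Injective (fun j : ℕ => j*ℓ + r) := by
    intro a b hab
    simp only at hab
    have h2 := Nat.add_right_cancel hab
    exact Nat.eq_of_mul_eq_mul_right (by omega) h2
  have hsupp : ∀ m, m ∉ Set.range (fun j : ℕ => j*ℓ + r) → ∑' n, f n m = 0 := by
    intro m hm
    rw [hcol_eq m]
    rw [if_neg]
    intro hmod
    apply hm
    refine ⟨m / ℓ, ?_⟩
    simp only
    have h := Nat.div_add_mod m ℓ
    rw [Nat.mul_comm ℓ (m/ℓ)] at h
    omega
  have hsupp' : Function.support (fun m => ∑' n, f n m) ⊆ Set.range (fun j : ℕ => j*ℓ + r) := by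
    intro m hm
    by_contra hc
    exact hm (hsupp m hc)
  have hcongr_col : ∀ j, ∑' n, f n (j*ℓ + r) = ∑' n, (g n (j*ℓ + r) : ℝ) * x^n := by
    intro j
    rw [hcol_eq]
    rw [if_pos (mod_helper2 j hr)]
  refine ⟨hw_sum, ?_, ?_⟩
  · have hS : Summable ((fun m => ∑' n, f n m) ∘ (fun j : ℕ => j*ℓ + r)) :=
      (hinj.summable_iff hsupp).mpr hcol_summable
    exact hS.congr hcongr_col
  · calc ∑' n, (∑ m ∈ Finset.range (n+1), if m % ℓ = r then (g n m : ℝ) else 0) * x^n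
        = ∑' n, ∑' m, f n m := tsum_congr (fun n => (hrow_sum n).symm)
      _ = ∑' m, ∑' n, f n m := hcomm
      _ = ∑' j, ∑' n, f n (j*ℓ + r) := (hinj.tsum_eq hsupp').symm
      _ = ∑' j, ∑' n, (g n (j*ℓ + r) : ℝ) * x^n := tsum_congr hcongr_col

end Swap


/-- For `ℓ ≥ 3` and `0 < x < 1/2`:
`x·U_{ℓ−1}(1/(2x)) · Σ_n (Σ_{0≤m≤n, m≡ℓ−2 (ℓ)} b(n,m))·xⁿ = 1 + x·Σ_n c(n,ℓ−1)·xⁿ`,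
all series converging absolutely. -/
theorem stmt15 (ℓ : ℕ) (hℓ : 3 ≤ ℓ) (x : ℝ) (hx0 : 0 < x) (hx : x < 1/2) :
    Summable (fun n : ℕ =>
      (∑ m ∈ Finset.range (n+1), if m % ℓ = ℓ - 2 then (bb ℓ n m : ℝ) else 0) * x ^ n) ∧
    Summable (fun n : ℕ => (cc ℓ n (ℓ - 1) : ℝ) * x ^ n) ∧
    x * (Polynomial.Chebyshev.U ℝ ((ℓ : ℤ) - 1)).eval (1 / (2 * x)) *
        ∑' n : ℕ,
          (∑ m ∈ Finset.range (n+1), if m % ℓ = ℓ - 2 then (bb ℓ n m : ℝ) else 0) * x ^ n =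
      1 + x * ∑' n : ℕ, (cc ℓ n (ℓ - 1) : ℝ) * x ^ n := by
  obtain ⟨k, rfl⟩ : ∃ k, ℓ = k + 3 := ⟨ℓ - 3, by omega⟩
  have e2 : k+3-2 = k+1 := by omega
  have e1 : k+3-1 = k+2 := by omega
  simp only [e1, e2]
  obtain ⟨hy0, hy1, hyx, h2xy⟩ := yy_facts hx0 hx
  set y := yy x with hydef
  have hxne : x ≠ 0 := ne_of_gt hx0
  have hQpos := (qq_pos hx0 hx (k+2)).1
  have hQne : qq x (k+2) ≠ 0 := ne_of_gt hQpos
  have hyk1 : y^(k+3) < 1 := pow_lt_one₀ hy0.le hy1 (by omega)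
  have hyk0 : 0 ≤ y^(k+3) := by positivity
  have hykne : 1 - y^(k+3) ≠ 0 := by intro h; rw [sub_eq_zero] at h; linarith
  have hW := swap_lemma hx0 hx (bb (k+3)) (show k+1 < k+3 by omega)
    (fun n m => bb_le _ n m) (fun n m h => bb_eq_zero h)
  have hC := swap_lemma hx0 hx aa (show k+2 < k+3 by omega)
    (fun n m => aa_le n m) (fun n m h => aa_eq_zero h)
  have hcc : ∀ n, ((cc (k+3) n (k+2) : ℕ) : ℝ)
      = ∑ m ∈ Finset.range (n+1), if m % (k+3) = k+2 then (aa n m : ℝ) else 0 := by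
    intro n
    rw [cc]
    push_cast
    rfl
  refine ⟨hW.1, hC.1.congr (fun n => by rw [← hcc n]), ?_⟩
  -- geometric sum
  have hgeo : ∑' j : ℕ, (y^(k+3))^j = (1 - y^(k+3))⁻¹ := tsum_geometric_of_lt_one hyk0 hyk1
  have hgeo_s : Summable (fun j : ℕ => (y^(k+3))^j) :=
    summable_geometric_of_lt_one hyk0 hyk1
  -- values
  have hterm0 : GG (k+3) x (0*(k+3)+(k+1)) = x^(k+1) / qq x (k+2) := by
    rw [show 0*(k+3)+(k+1) = k+1 by ring, eq_div_iff hQne]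
    linear_combination GG_val0 hx0 hx k
  have hterm : ∀ j, GG (k+3) x ((j+1)*(k+3)+(k+1))
      = (x^(k+2) * y^(k+2) * FF x 0 / qq x (k+2)) * (y^(k+3))^j := by
    intro j
    have h1 := GG_valj hx0 hx k j
    rw [FF_pow hx0 hx (j*(k+3)+k+2)] at h1
    rw [show (j+1)*(k+3)+(k+1) = j*(k+3)+k+3+(k+1) by ring]
    have hyp : y^(j*(k+3)+k+2) = y^(k+2) * (y^(k+3))^j := by
      rw [show j*(k+3)+k+2 = (k+2) + (k+3)*j by ring, pow_add, pow_mul]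
    have h2 : qq x (k+2) * ((x^(k+2) * y^(k+2) * FF x 0 / qq x (k+2)) * (y^(k+3))^j)
        = x^(k+2) * (y^(j*(k+3)+k+2) * FF x 0) := by
      rw [hyp]
      field_simp
    exact mul_left_cancel₀ hQne (h1.trans h2.symm)
  have hFFt : ∀ j, FF x (j*(k+3)+(k+2)) = (y^(k+2) * FF x 0) * (y^(k+3))^j := by
    intro j
    have hyp : y^(j*(k+3)+(k+2)) = y^(k+2) * (y^(k+3))^j := by
      rw [show j*(k+3)+(k+2) = (k+2) + (k+3)*j by ring, pow_add, pow_mul]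
    rw [FF_pow hx0 hx, ← hydef, hyp]
    ring
  -- the two tsums
  have hWsummable : Summable (fun j => GG (k+3) x (j*(k+3)+(k+1))) := hW.2.1
  have hWt : ∑' n : ℕ, (∑ m ∈ Finset.range (n+1), if m % (k+3) = k+1 then (bb (k+3) n m : ℝ) else 0) * x ^ n
      = x^(k+1) / qq x (k+2) + (x^(k+2) * y^(k+2) * FF x 0 / qq x (k+2)) * (1 - y^(k+3))⁻¹ := by
    rw [hW.2.2]
    have : ∑' j, GG (k+3) x (j*(k+3)+(k+1))
        = GG (k+3) x (0*(k+3)+(k+1)) + ∑' j, GG (k+3) x ((j+1)*(k+3)+(k+1)) :=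
      Summable.tsum_eq_zero_add hWsummable
    rw [show (∑' (j : ℕ) (n : ℕ), (bb (k+3) n (j*(k+3)+(k+1)) : ℝ) * x ^ n)
        = ∑' j, GG (k+3) x (j*(k+3)+(k+1)) from rfl, this, hterm0]
    congr 1
    rw [tsum_congr hterm, tsum_mul_left, hgeo]
  have hCt : ∑' n : ℕ, ((cc (k+3) n (k+2) : ℕ) : ℝ) * x ^ n
      = (y^(k+2) * FF x 0) * (1 - y^(k+3))⁻¹ := by
    rw [tsum_congr (fun n => by rw [hcc n])]
    rw [hC.2.2]
    rw [show (∑' (j : ℕ) (n : ℕ), (aa n (j*(k+3)+(k+2)) : ℝ) * x ^ n)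
        = ∑' j, FF x (j*(k+3)+(k+2)) from rfl]
    rw [tsum_congr hFFt, tsum_mul_left, hgeo]
  -- Chebyshev
  have hidx : ((↑(k+3):ℤ) - 1) = ((k+2 : ℕ) : ℤ) := by push_cast; ring
  have hUq : (Polynomial.Chebyshev.U ℝ ((↑(k+3):ℤ) - 1)).eval (1 / (2 * x))
      = qq x (k+2) / x^(k+2) := by
    rw [hidx, eq_div_iff (pow_ne_zero _ hxne)]
    linear_combination - qq_cheb hx0 (k+2)
  rw [hWt, hCt, hUq]
  field_simp
  ring
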